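/- arXiv:1412.1181 — 4 statements merged into one kernel-verified Lean document; each statement's English description precedes it below -/
import Mathlib

section
/- Let R be an n×n symmetric positive-definite correlation matrix, ρ_i = (R_{1i},...,R_{i-1,i}), ρ_i^{*j} = (R_{1j},...,R_{i-1,j}) for j ≥ i, and c_i = 1 - ρ_i R_{i-1}^{-1} ρ_i^T. Then for all i ≥ 1 and j, l with j ≥ l ≥ i+1: ρ_{i+1}^{*j} R_i^{-1} (ρ_{i+1}^{*l})^T = ρ_i^{*j} R_{i-1}^{-1} (ρ_i^{*l})^T + (R_{ij} - ρ_i^{*j} R_{i-1}^{-1} ρ_i^T)(R_{il} - ρ_i^{*l} R_{i-1}^{-1} ρ_i^T)/c_i. -/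
/-!
Write the leading minor as a bordered matrix `R_i = [[R_{i-1}, ρ_iᵀ], [ρ_i, 1]]`. Block elimination
solves `R_i z = (ρ_{i+1}^{*l})ᵀ` explicitly: the last coordinate of `z` is
`s = (R_{il} - ρ_i^{*l} R_{i-1}⁻¹ ρ_iᵀ) / c_i` and the others are `R_{i-1}⁻¹ (ρ_i^{*l} - s ρ_i)ᵀ`;
pairing `z` with `ρ_{i+1}^{*j}` gives the identity. The pivot `c_i` is nonzero because otherwise
`R_i` would kill the nonzero vector `(-R_{i-1}⁻¹ ρ_iᵀ, 1)`.
-/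

open Matrix

/-- Leading `i × i` principal submatrix. -/
def lead {n : ℕ} (R : Matrix (Fin n) (Fin n) ℝ) (i : ℕ) (h : i ≤ n) :
    Matrix (Fin i) (Fin i) ℝ :=
  R.submatrix (Fin.castLE h) (Fin.castLE h)

/-- First `i` entries of column `j` of `R`. -/
def colv {n : ℕ} (R : Matrix (Fin n) (Fin n) ℝ) (i : ℕ) (h : i ≤ n) (j : Fin n) :
    Fin i → ℝ :=
  fun k => R (Fin.castLE h k) j

namespace Matrix

variable {α : Type*} {m : ℕ}

theorem IsSymm.dotProduct_mulVec_comm [CommSemiring α] {ι : Type*} [Fintype ι]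
    {B : Matrix ι ι α} (hB : B.IsSymm) (x y : ι → α) : x ⬝ᵥ B *ᵥ y = y ⬝ᵥ B *ᵥ x := by
  rw [dotProduct_mulVec, ← mulVec_transpose, hB.eq, dotProduct_comm]

theorem snoc_dotProduct_snoc [AddCommMonoid α] [Mul α] (x y : Fin m → α) (a b : α) :
    (Fin.snoc x a : Fin (m + 1) → α) ⬝ᵥ Fin.snoc y b = x ⬝ᵥ y + a * b := by
  simp [dotProduct, Fin.sum_univ_castSucc]

/-- For symmetric `A`, `A = [[A.initBlock, A.lastCol], [A.lastColᵀ, A (last m) (last m)]]`. -/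
def initBlock (A : Matrix (Fin (m + 1)) (Fin (m + 1)) α) : Matrix (Fin m) (Fin m) α :=
  A.submatrix Fin.castSucc Fin.castSucc

def lastCol (A : Matrix (Fin (m + 1)) (Fin (m + 1)) α) : Fin m → α :=
  fun p => A p.castSucc (Fin.last m)

theorem isSymm_initBlock {A : Matrix (Fin (m + 1)) (Fin (m + 1)) α} (hA : A.IsSymm) :
    A.initBlock.IsSymm :=
  hA.submatrix _

theorem IsSymm.mulVec_snoc [CommSemiring α] {A : Matrix (Fin (m + 1)) (Fin (m + 1)) α}
    (hA : A.IsSymm) (x : Fin m → α) (t : α) :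
    A *ᵥ Fin.snoc x t =
      Fin.snoc (A.initBlock *ᵥ x + t • A.lastCol)
        (A.lastCol ⬝ᵥ x + t * A (Fin.last m) (Fin.last m)) := by
  funext k
  refine Fin.lastCases ?_ (fun p => ?_) k
  · simp [mulVec, dotProduct, Fin.sum_univ_castSucc, lastCol, hA.apply, mul_comm]
  · simp [mulVec, dotProduct, Fin.sum_univ_castSucc, lastCol, initBlock, mul_comm]

variable {K : Type*} [Field K]

noncomputable def lastSchurCompl (A : Matrix (Fin (m + 1)) (Fin (m + 1)) K) : K :=
  A (Fin.last m) (Fin.last m) - A.lastCol ⬝ᵥ A.initBlock⁻¹ *ᵥ A.lastCol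

variable {A : Matrix (Fin (m + 1)) (Fin (m + 1)) K}

theorem lastSchurCompl_ne_zero (hA : A.IsSymm) (hAu : IsUnit A) (hSu : IsUnit A.initBlock) :
    A.lastSchurCompl ≠ 0 := by
  intro hc
  set w : Fin (m + 1) → K := Fin.snoc (-(A.initBlock⁻¹ *ᵥ A.lastCol)) 1
  have hAw : A *ᵥ w = A *ᵥ 0 := by
    rw [hA.mulVec_snoc, mulVec_neg, mulVec_mulVec,
      mul_nonsing_inv _ ((isUnit_iff_isUnit_det _).1 hSu), one_mulVec, one_smul, neg_add_cancel,
      dotProduct_neg, one_mul, neg_add_eq_sub, ← lastSchurCompl, hc, mulVec_zero]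
    ext k
    refine Fin.lastCases ?_ (fun p => ?_) k <;> simp
  have hw_last := congrFun (mulVec_injective_iff_isUnit.2 hAu hAw) (Fin.last m)
  simp [w] at hw_last

theorem IsSymm.inv_mulVec_snoc (hA : A.IsSymm) (hAu : IsUnit A) (hSu : IsUnit A.initBlock)
    (y : Fin m → K) (b : K) :
    A⁻¹ *ᵥ Fin.snoc y b =
      let s := (b - y ⬝ᵥ A.initBlock⁻¹ *ᵥ A.lastCol) / A.lastSchurCompl
      Fin.snoc (A.initBlock⁻¹ *ᵥ y - s • (A.initBlock⁻¹ *ᵥ A.lastCol)) s := by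
  lift_lets
  intro s
  have hSS : A.initBlock * A.initBlock⁻¹ = 1 :=
    mul_nonsing_inv _ ((isUnit_iff_isUnit_det _).1 hSu)
  have hs : s * A.lastSchurCompl = b - y ⬝ᵥ A.initBlock⁻¹ *ᵥ A.lastCol :=
    div_mul_cancel₀ _ (lastSchurCompl_ne_zero hA hAu hSu)
  have hsolve : A *ᵥ Fin.snoc (A.initBlock⁻¹ *ᵥ y - s • (A.initBlock⁻¹ *ᵥ A.lastCol)) s =
      Fin.snoc y b := by
    rw [hA.mulVec_snoc, mulVec_sub, mulVec_smul, mulVec_mulVec, mulVec_mulVec, hSS, one_mulVec,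
      one_mulVec, sub_add_cancel, dotProduct_sub, dotProduct_smul, smul_eq_mul,
      (isSymm_initBlock hA).inv.dotProduct_mulVec_comm A.lastCol y]
    congr 1
    unfold lastSchurCompl at hs
    linear_combination hs
  rw [← hsolve, mulVec_mulVec, nonsing_inv_mul _ ((isUnit_iff_isUnit_det _).1 hAu), one_mulVec]

theorem IsSymm.snoc_dotProduct_inv_mulVec_snoc (hA : A.IsSymm) (hAu : IsUnit A)
    (hSu : IsUnit A.initBlock) (x y : Fin m → K) (a b : K) :
    Fin.snoc x a ⬝ᵥ A⁻¹ *ᵥ Fin.snoc y b =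
      x ⬝ᵥ A.initBlock⁻¹ *ᵥ y +
        (a - x ⬝ᵥ A.initBlock⁻¹ *ᵥ A.lastCol) * (b - y ⬝ᵥ A.initBlock⁻¹ *ᵥ A.lastCol) /
          A.lastSchurCompl := by
  rw [hA.inv_mulVec_snoc hAu hSu, snoc_dotProduct_snoc, dotProduct_sub, dotProduct_smul,
    smul_eq_mul]
  ring

end Matrix

section LeadingMinors

variable {n : ℕ} (R : Matrix (Fin n) (Fin n) ℝ) {m : ℕ} (hm : m + 1 ≤ n)

theorem lead_succ_initBlock :
    (lead R (m + 1) hm).initBlock = lead R m (Nat.le_of_succ_le hm) :=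
  rfl

theorem lead_succ_lastCol :
    (lead R (m + 1) hm).lastCol = colv R m (Nat.le_of_succ_le hm) ⟨m, hm⟩ :=
  rfl

theorem colv_succ (j : Fin n) :
    colv R (m + 1) hm j = Fin.snoc (colv R m (Nat.le_of_succ_le hm) j) (R ⟨m, hm⟩ j) := by
  funext k
  refine Fin.lastCases ?_ (fun p => ?_) k
  · rw [Fin.snoc_last]; rfl
  · rw [Fin.snoc_castSucc]; rfl

end LeadingMinors

/-- Indices are 0-based: `m` is the paper's `i - 1`, and `⟨m, hm⟩` its row `i`. -/
theorem stmt3_general {n : ℕ} (R : Matrix (Fin n) (Fin n) ℝ) (hR : R.PosDef)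
    (hdiag : ∀ k, R k k = 1) (m : ℕ) (hm : m + 1 ≤ n) (jf lf : Fin n) :
    colv R (m + 1) hm jf ⬝ᵥ (lead R (m + 1) hm)⁻¹ *ᵥ colv R (m + 1) hm lf =
      colv R m (Nat.le_of_succ_le hm) jf ⬝ᵥ
          (lead R m (Nat.le_of_succ_le hm))⁻¹ *ᵥ colv R m (Nat.le_of_succ_le hm) lf +
        (R ⟨m, hm⟩ jf - colv R m (Nat.le_of_succ_le hm) jf ⬝ᵥ
            (lead R m (Nat.le_of_succ_le hm))⁻¹ *ᵥ
              colv R m (Nat.le_of_succ_le hm) ⟨m, hm⟩) *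
          (R ⟨m, hm⟩ lf - colv R m (Nat.le_of_succ_le hm) lf ⬝ᵥ
              (lead R m (Nat.le_of_succ_le hm))⁻¹ *ᵥ
                colv R m (Nat.le_of_succ_le hm) ⟨m, hm⟩) /
          (1 - colv R m (Nat.le_of_succ_le hm) ⟨m, hm⟩ ⬝ᵥ
              (lead R m (Nat.le_of_succ_le hm))⁻¹ *ᵥ
                colv R m (Nat.le_of_succ_le hm) ⟨m, hm⟩) := by
  have hA : (lead R (m + 1) hm).PosDef := hR.submatrix (Fin.castLE_injective hm)
  have hS : (lead R (m + 1) hm).initBlock.PosDef := hA.submatrix (Fin.castSucc_injective m)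
  rw [colv_succ R hm jf, colv_succ R hm lf,
    (isHermitian_iff_isSymm.1 hA.isHermitian).snoc_dotProduct_inv_mulVec_snoc hA.isUnit hS.isUnit,
    lastSchurCompl, lead_succ_initBlock, lead_succ_lastCol,
    show lead R (m + 1) hm (Fin.last m) (Fin.last m) = 1 from hdiag ⟨m, hm⟩]

/-- Recursive identity for the quadratic forms (Eq. (A.1) of the paper):
`ρ_{i+1}^{*j} R_i⁻¹ (ρ_{i+1}^{*l})ᵀ = ρ_i^{*j} R_{i−1}⁻¹ (ρ_i^{*l})ᵀ
  + (R_{ij} − ρ_i^{*j} R_{i−1}⁻¹ ρ_iᵀ)(R_{il} − ρ_i^{*l} R_{i−1}⁻¹ ρ_iᵀ)/c_i`.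
Here `m = i − 1` is 0-indexed, columns `jf, lf` are 0-indexed (`j ≥ l ≥ i + 1`
becomes `jf ≥ lf ≥ m + 1`). -/
theorem stmt3 {n : ℕ} (R : Matrix (Fin n) (Fin n) ℝ) (hR : R.PosDef)
    (hdiag : ∀ k, R k k = 1) (m : ℕ) (hm : m + 1 ≤ n) (jf lf : Fin n)
    (hl : m + 1 ≤ (lf : ℕ)) (hjl : (lf : ℕ) ≤ (jf : ℕ)) :
    colv R (m + 1) hm jf ⬝ᵥ (lead R (m + 1) hm)⁻¹ *ᵥ colv R (m + 1) hm lf =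
      colv R m (Nat.le_of_succ_le hm) jf ⬝ᵥ
          (lead R m (Nat.le_of_succ_le hm))⁻¹ *ᵥ colv R m (Nat.le_of_succ_le hm) lf +
        (R ⟨m, hm⟩ jf - colv R m (Nat.le_of_succ_le hm) jf ⬝ᵥ
            (lead R m (Nat.le_of_succ_le hm))⁻¹ *ᵥ
              colv R m (Nat.le_of_succ_le hm) ⟨m, hm⟩) *
          (R ⟨m, hm⟩ lf - colv R m (Nat.le_of_succ_le hm) lf ⬝ᵥ
              (lead R m (Nat.le_of_succ_le hm))⁻¹ *ᵥ
                colv R m (Nat.le_of_succ_le hm) ⟨m, hm⟩) /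
          (1 - colv R m (Nat.le_of_succ_le hm) ⟨m, hm⟩ ⬝ᵥ
              (lead R m (Nat.le_of_succ_le hm))⁻¹ *ᵥ
                colv R m (Nat.le_of_succ_le hm) ⟨m, hm⟩) :=
  stmt3_general R hR hdiag m hm jf lf
end

section
/- Let L be the n×n lower-triangular matrix whose nonzero entries are L_{ji} = ρ_{ij(1,...,i-1)} = (R_{ij} - ρ_i^{*j} R_{i-1}^{-1} ρ_i^T)/sqrt(1 - ρ_i R_{i-1}^{-1} ρ_i^T) for j ≥ i (so in particular L_{ii} = sqrt(1 - ρ_i R_{i-1}^{-1} ρ_i^T) and L_{j1} = R_{1j}). Then L L^T = R, i.e., L is the Cholesky factor of R. -/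
open Matrix

/-- The semi-partial correlation coefficient `ρ_{k+1,j(1,…,k)}` (0-indexed `k`,
0-indexed column `j`):
`(R_{kj} − ρ_k^{*j} R_{k−1}⁻¹ ρ_kᵀ)/√(1 − ρ_k R_{k−1}⁻¹ ρ_kᵀ)`. -/
noncomputable def spc {n : ℕ} (R : Matrix (Fin n) (Fin n) ℝ) (k : ℕ) (hk : k < n)
    (j : Fin n) : ℝ :=
  (R ⟨k, hk⟩ j - colv R k hk.le j ⬝ᵥ (lead R k hk.le)⁻¹ *ᵥ colv R k hk.le ⟨k, hk⟩) /
    Real.sqrt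
      (1 - colv R k hk.le ⟨k, hk⟩ ⬝ᵥ (lead R k hk.le)⁻¹ *ᵥ colv R k hk.le ⟨k, hk⟩)

/-!
Write `Q_k(j, l) = ρ^{*j} R_k⁻¹ (ρ^{*l})ᵀ` for the bilinear form of the leading `k × k` block
(`leadForm`). Eliminating the last row and column of `R_{k+1}` expresses `R_{k+1}⁻¹` through
`R_k⁻¹` and the Schur complement `R_{kk} - Q_k(k, k)`, which is positive since `R` is positive
definite. This yields the rank-one update
`Q_{k+1}(j, l) = Q_k(j, l) + ρ_{k+1,j(1,…,k)} ρ_{k+1,l(1,…,k)}`, so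
`∑_{i ≤ k} L_{ji} L_{li} = Q_{k+1}(j, l)`. For `l ≤ k` the vector `ρ^{*l}` is the `l`-th column of
`R_{k+1}`, so `Q_{k+1}(j, l) = R_{lj}`; taking `k = l` gives `(L Lᵀ)_{jl} = R_{jl}`.
-/

namespace Matrix

section Semiring
variable {α : Type*} [CommSemiring α] {k : ℕ} (M : Matrix (Fin (k + 1)) (Fin (k + 1)) α)

theorem mulVec_snoc_castSucc (x : Fin k → α) (t : α) (i : Fin k) :
    (M *ᵥ Fin.snoc x t) i.castSucc
      = (M.submatrix Fin.castSucc Fin.castSucc *ᵥ x) i + M i.castSucc (Fin.last k) * t := by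
  simp [mulVec, dotProduct, Fin.sum_univ_castSucc]

theorem mulVec_snoc_last (x : Fin k → α) (t : α) :
    (M *ᵥ Fin.snoc x t) (Fin.last k)
      = (fun i => M (Fin.last k) i.castSucc) ⬝ᵥ x + M (Fin.last k) (Fin.last k) * t := by
  simp [mulVec, dotProduct, Fin.sum_univ_castSucc]

omit M in
theorem dotProduct_snoc (v : Fin (k + 1) → α) (x : Fin k → α) (t : α) :
    v ⬝ᵥ Fin.snoc x t = (fun i => v i.castSucc) ⬝ᵥ x + v (Fin.last k) * t := by
  simp [dotProduct, Fin.sum_univ_castSucc]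

end Semiring

section Field
variable {K : Type*} [Field K] {k : ℕ} (M : Matrix (Fin (k + 1)) (Fin (k + 1)) K)

/-- `d - b'ᵀ A⁻¹ b` for `M = [A b; b'ᵀ d]` with `A` the leading `k × k` block. -/
noncomputable def lastSchurComplement : K :=
  M (Fin.last k) (Fin.last k) -
    (fun i => M (Fin.last k) i.castSucc) ⬝ᵥ
      (M.submatrix Fin.castSucc Fin.castSucc)⁻¹ *ᵥ fun i => M i.castSucc (Fin.last k)

variable {M}

theorem mulVec_snoc_neg_inv_mulVec_one
    (hA : IsUnit (M.submatrix Fin.castSucc Fin.castSucc).det) :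
    M *ᵥ Fin.snoc (-((M.submatrix Fin.castSucc Fin.castSucc)⁻¹ *ᵥ
        fun i => M i.castSucc (Fin.last k))) 1
      = Fin.snoc 0 M.lastSchurComplement := by
  ext p
  induction p using Fin.lastCases with
  | last =>
    rw [mulVec_snoc_last, Fin.snoc_last, lastSchurComplement, dotProduct_neg]; ring
  | cast i =>
    rw [mulVec_snoc_castSucc, Fin.snoc_castSucc, mulVec_neg, mulVec_mulVec,
      mul_nonsing_inv _ hA, one_mulVec]
    simp

theorem mulVec_snoc_inv_mulVec_zero (hA : IsUnit (M.submatrix Fin.castSucc Fin.castSucc).det)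
    (y : Fin k → K) :
    M *ᵥ Fin.snoc ((M.submatrix Fin.castSucc Fin.castSucc)⁻¹ *ᵥ y) 0
      = Fin.snoc y ((fun i => M (Fin.last k) i.castSucc) ⬝ᵥ
          (M.submatrix Fin.castSucc Fin.castSucc)⁻¹ *ᵥ y) := by
  ext p
  induction p using Fin.lastCases with
  | last => rw [mulVec_snoc_last, Fin.snoc_last]; ring
  | cast i =>
    rw [mulVec_snoc_castSucc, Fin.snoc_castSucc, mulVec_mulVec, mul_nonsing_inv _ hA, one_mulVec]
    ring

theorem dotProduct_inv_mulVec_eq (hA : IsUnit (M.submatrix Fin.castSucc Fin.castSucc).det)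
    (hs : M.lastSchurComplement ≠ 0) (x y : Fin (k + 1) → K) :
    x ⬝ᵥ M⁻¹ *ᵥ y
      = (fun i => x i.castSucc) ⬝ᵥ (M.submatrix Fin.castSucc Fin.castSucc)⁻¹ *ᵥ
            (fun i => y i.castSucc)
        + (x (Fin.last k) - (fun i => x i.castSucc) ⬝ᵥ
            (M.submatrix Fin.castSucc Fin.castSucc)⁻¹ *ᵥ fun i => M i.castSucc (Fin.last k))
          * (y (Fin.last k) - (fun i => M (Fin.last k) i.castSucc) ⬝ᵥ
            (M.submatrix Fin.castSucc Fin.castSucc)⁻¹ *ᵥ fun i => y i.castSucc)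
          / M.lastSchurComplement := by
  set A := M.submatrix Fin.castSucc Fin.castSucc
  set b : Fin k → K := fun i => M i.castSucc (Fin.last k)
  set b' : Fin k → K := fun i => M (Fin.last k) i.castSucc
  -- Block elimination: `M` sends `snoc (-A⁻¹ b) 1` to `snoc 0 s`, which fixes the last coordinate.
  let solve (z : Fin (k + 1) → K) : Fin (k + 1) → K :=
    Fin.snoc (A⁻¹ *ᵥ fun i => z i.castSucc) 0 +
      ((z (Fin.last k) - b' ⬝ᵥ A⁻¹ *ᵥ fun i => z i.castSucc) / M.lastSchurComplement) •
        Fin.snoc (-(A⁻¹ *ᵥ b)) 1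
  have hsolve (z : Fin (k + 1) → K) : M *ᵥ solve z = z := by
    rw [mulVec_add, mulVec_smul, mulVec_snoc_inv_mulVec_zero hA,
      mulVec_snoc_neg_inv_mulVec_one hA]
    ext p
    induction p using Fin.lastCases with
    | last => simp only [Pi.add_apply, Pi.smul_apply, Fin.snoc_last, smul_eq_mul]; field_simp; ring
    | cast i => simp
  have hM : IsUnit M := mulVec_surjective_iff_isUnit.mp fun z => ⟨solve z, hsolve z⟩
  have hinv : M⁻¹ *ᵥ y = solve y := by
    conv_lhs => rw [← hsolve y]
    rw [mulVec_mulVec, nonsing_inv_mul _ ((isUnit_iff_isUnit_det M).mp hM), one_mulVec]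
  rw [hinv, dotProduct_add, dotProduct_smul, dotProduct_snoc, dotProduct_snoc, dotProduct_neg,
    smul_eq_mul]
  ring

end Field

theorem PosDef.lastSchurComplement_pos {k : ℕ} {M : Matrix (Fin (k + 1)) (Fin (k + 1)) ℝ}
    (hM : M.PosDef) : 0 < M.lastSchurComplement := by
  have hA := (isUnit_iff_isUnit_det _).mp (hM.submatrix (Fin.castSucc_injective k)).isUnit
  have hv : (Fin.snoc (-((M.submatrix Fin.castSucc Fin.castSucc)⁻¹ *ᵥ
      fun i => M i.castSucc (Fin.last k))) 1 : Fin (k + 1) → ℝ) ≠ 0 :=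
    fun h => by simpa using congrFun h (Fin.last k)
  simpa [mulVec_snoc_neg_inv_mulVec_one hA, dotProduct_snoc] using hM.dotProduct_mulVec_pos hv

end Matrix

theorem Fin.sum_univ_eq_sum_castLE {M : Type*} [AddCommMonoid M] {m n : ℕ} (h : m ≤ n)
    (f : Fin n → M) (hf : ∀ i : Fin n, m ≤ (i : ℕ) → f i = 0) :
    ∑ i, f i = ∑ i : Fin m, f (Fin.castLE h i) := by
  calc ∑ i, f i = ∑ i ∈ Finset.univ.map (Fin.castLEEmb h), f i :=
        (Finset.sum_subset (Finset.subset_univ _) fun i _ hi => hf i <| by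
          by_contra! hlt
          exact hi (Finset.mem_map.mpr ⟨⟨i, hlt⟩, Finset.mem_univ _, rfl⟩)).symm
    _ = ∑ i : Fin m, f (Fin.castLE h i) := Finset.sum_map _ _ _

section Correlation

variable {n : ℕ} {R : Matrix (Fin n) (Fin n) ℝ}

noncomputable def leadForm (R : Matrix (Fin n) (Fin n) ℝ) (k : ℕ) (h : k ≤ n) (j l : Fin n) :
    ℝ :=
  colv R k h j ⬝ᵥ (lead R k h)⁻¹ *ᵥ colv R k h l

theorem lead_posDef (hR : R.PosDef) (k : ℕ) (h : k ≤ n) : (lead R k h).PosDef :=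
  hR.submatrix (Fin.castLE_injective h)

theorem lead_isUnit_det (hR : R.PosDef) (k : ℕ) (h : k ≤ n) : IsUnit (lead R k h).det :=
  (isUnit_iff_isUnit_det _).mp (lead_posDef hR k h).isUnit

theorem leadForm_comm (hR : R.IsSymm) (k : ℕ) (h : k ≤ n) (j l : Fin n) :
    leadForm R k h j l = leadForm R k h l j := by
  have hlead : (lead R k h)ᵀ = lead R k h := (hR.submatrix _).eq
  rw [leadForm, dotProduct_mulVec, ← mulVec_transpose, transpose_nonsing_inv, hlead,
    dotProduct_comm, leadForm]

theorem leadForm_of_lt (hR : R.PosDef) {k : ℕ} (h : k ≤ n) (j l : Fin n) (hl : (l : ℕ) < k) :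
    leadForm R k h j l = R l j := by
  have hcol : colv R k h l = lead R k h *ᵥ Pi.single ⟨l, hl⟩ 1 := by
    ext i
    simp [lead, colv]
  rw [leadForm, hcol, mulVec_mulVec, nonsing_inv_mul _ (lead_isUnit_det hR k h), one_mulVec,
    dotProduct_single_one]
  rfl

theorem lead_submatrix_castSucc {k : ℕ} (hk : k < n) :
    (lead R (k + 1) hk).submatrix Fin.castSucc Fin.castSucc = lead R k hk.le :=
  rfl

theorem lastSchurComplement_lead (hR : R.IsSymm) {k : ℕ} (hk : k < n) :
    (lead R (k + 1) hk).lastSchurComplement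
      = R ⟨k, hk⟩ ⟨k, hk⟩ - leadForm R k hk.le ⟨k, hk⟩ ⟨k, hk⟩ := by
  have hrow : (fun i : Fin k => lead R (k + 1) hk (Fin.last k) i.castSucc)
      = colv R k hk.le ⟨k, hk⟩ := funext fun i => hR.apply _ _
  rw [lastSchurComplement, hrow]
  rfl

theorem leadForm_succ (hR : R.PosDef) {k : ℕ} (hk : k < n) (j l : Fin n) :
    leadForm R (k + 1) hk j l
      = leadForm R k hk.le j l
        + (R ⟨k, hk⟩ j - leadForm R k hk.le j ⟨k, hk⟩)
          * (R ⟨k, hk⟩ l - leadForm R k hk.le ⟨k, hk⟩ l)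
          / (R ⟨k, hk⟩ ⟨k, hk⟩ - leadForm R k hk.le ⟨k, hk⟩ ⟨k, hk⟩) := by
  have hsymm : R.IsSymm := isHermitian_iff_isSymm.mp hR.1
  have hs := (lead_posDef hR (k + 1) hk).lastSchurComplement_pos
  have hrow : (fun i : Fin k => lead R (k + 1) hk (Fin.last k) i.castSucc)
      = colv R k hk.le ⟨k, hk⟩ := funext fun i => hsymm.apply _ _
  have hA := lead_isUnit_det hR k hk.le
  rw [← lead_submatrix_castSucc hk] at hA
  rw [leadForm, dotProduct_inv_mulVec_eq hA hs.ne', hrow, lastSchurComplement_lead hsymm,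
    lead_submatrix_castSucc]
  rfl

theorem spc_eq_leadForm (k : ℕ) (hk : k < n) (j : Fin n) :
    spc R k hk j = (R ⟨k, hk⟩ j - leadForm R k hk.le j ⟨k, hk⟩) /
      √(1 - leadForm R k hk.le ⟨k, hk⟩ ⟨k, hk⟩) :=
  rfl

theorem spc_mul_spc (hR : R.PosDef) (hdiag : ∀ k, R k k = 1) {k : ℕ} (hk : k < n)
    (j l : Fin n) :
    spc R k hk j * spc R k hk l
      = (R ⟨k, hk⟩ j - leadForm R k hk.le j ⟨k, hk⟩)
          * (R ⟨k, hk⟩ l - leadForm R k hk.le ⟨k, hk⟩ l)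
          / (R ⟨k, hk⟩ ⟨k, hk⟩ - leadForm R k hk.le ⟨k, hk⟩ ⟨k, hk⟩) := by
  have hs := (lead_posDef hR (k + 1) hk).lastSchurComplement_pos
  rw [lastSchurComplement_lead (isHermitian_iff_isSymm.mp hR.1), hdiag] at hs
  rw [spc_eq_leadForm, spc_eq_leadForm, div_mul_div_comm, Real.mul_self_sqrt hs.le, hdiag,
    leadForm_comm (isHermitian_iff_isSymm.mp hR.1) k hk.le l]

theorem sum_spc_mul_spc (hR : R.PosDef) (hdiag : ∀ k, R k k = 1) (k : ℕ) (hk : k ≤ n)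
    (j l : Fin n) :
    ∑ i : Fin k, spc R i (i.isLt.trans_le hk) j * spc R i (i.isLt.trans_le hk) l
      = leadForm R k hk j l := by
  induction k with
  | zero => simp [leadForm]
  | succ k ih =>
    rw [Fin.sum_univ_castSucc, leadForm_succ hR hk, ← spc_mul_spc hR hdiag hk,
      ← ih (Nat.le_of_succ_le hk)]
    rfl

end Correlation

/-- First parametrization of the Cholesky factor: the lower-triangular matrix
whose nonzero entries are the semi-partial correlations `L_{ji} = ρ_{ij(1,…,i−1)}`
(0-indexed: `L j i = spc R i j` for `i ≤ j`) satisfies `L Lᵀ = R`. -/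
theorem stmt5 {n : ℕ} (R : Matrix (Fin n) (Fin n) ℝ) (hR : R.PosDef)
    (hdiag : ∀ k, R k k = 1) (L : Matrix (Fin n) (Fin n) ℝ)
    (hL : ∀ j i : Fin n, L j i = if (i : ℕ) ≤ (j : ℕ) then spc R i i.isLt j else 0) :
    L * Lᵀ = R := by
  have hsymm : R.IsSymm := isHermitian_iff_isSymm.mp hR.1
  have hlower (j l : Fin n) (hlj : l ≤ j) : (L * Lᵀ) j l = R j l := by
    have hvanish (i : Fin n) (hi : (l : ℕ) + 1 ≤ i) : L j i * L l i = 0 := by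
      rw [hL l i, if_neg (by omega), mul_zero]
    calc (L * Lᵀ) j l = ∑ i, L j i * L l i := rfl
      _ = ∑ i : Fin (l + 1), spc R i (i.isLt.trans_le l.isLt) j * spc R i _ l := by
        rw [Fin.sum_univ_eq_sum_castLE l.isLt _ hvanish]
        refine Finset.sum_congr rfl fun i _ => ?_
        have hil : (i : ℕ) ≤ l := Nat.lt_succ_iff.mp i.isLt
        rw [hL, hL, if_pos (by exact hil.trans hlj), if_pos (by exact hil)]
        rfl
      _ = leadForm R (l + 1) l.isLt j l := sum_spc_mul_spc hR hdiag _ _ j l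
      _ = R l j := leadForm_of_lt hR _ j l (Nat.lt_succ_self l)
      _ = R j l := hsymm.apply j l
  ext j l
  rcases le_total l j with hlj | hjl
  · exact hlower j l hlj
  · rw [(isSymm_mul_transpose_self L).apply, hlower l j hjl, hsymm.apply]
end

section
/- Define R_i^{*j} to be the i×i matrix obtained from R_{i-1} by appending the row/column ρ_i^{*j} = (R_{1j},...,R_{i-1,j}) with diagonal entry 1 (so R_i^{*j} = [[R_{i-1}, (ρ_i^{*j})^T],[ρ_i^{*j}, 1]]). Then for j ≥ i+1 ≥ 3: det(R_i^{*j})/det(R_{i-1}) - det(R_{i+1}^{*j})/det(R_i) = (R_{ij} - ρ_i^{*j} R_{i-1}^{-1} ρ_i^T)^2 · det(R_{i-1})/det(R_i). -/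
open Matrix

/-- The bordered matrix `R_{i+1}^{*j}` (0-indexed size parameter `i`):
`[[R_i, (ρ_{i+1}^{*j})ᵀ], [ρ_{i+1}^{*j}, 1]]`, i.e. the leading `i × i`
submatrix bordered by the first `i` entries of column `j` with corner `1`. -/
def brd {n : ℕ} (R : Matrix (Fin n) (Fin n) ℝ) (i : ℕ) (h : i ≤ n) (j : Fin n) :
    Matrix (Fin (i + 1)) (Fin (i + 1)) ℝ :=
  Matrix.of fun k l =>
    if hk : (k : ℕ) < i then
      if hl : (l : ℕ) < i then R ⟨k, lt_of_lt_of_le hk h⟩ ⟨l, lt_of_lt_of_le hl h⟩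
      else R ⟨k, lt_of_lt_of_le hk h⟩ j
    else if hl : (l : ℕ) < i then R ⟨l, lt_of_lt_of_le hl h⟩ j
    else 1


/-!
Let `A = R_{i-1}` and let `S` be the Schur complement of `A` in `R`,
`S p q = R p q - R_{p,·} A⁻¹ R_{·,q}`. A principal submatrix of `R` whose leading block is `A`
has determinant `det A` times the determinant of the corresponding principal submatrix of `S`.
Hence `det R_i^{*j} = det A · S j j`, `det R_i = det A · S i i` and
`det R_{i+1}^{*j} = det A · (S i i · S j j - (S i j)²)`, and the identity becomes
`S j j - (S i i · S j j - (S i j)²) / S i i = (S i j)² / S i i`.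
-/

namespace Matrix

lemma submatrix_sumElim_eq_fromBlocks {ι κ τ α : Type*} (M : Matrix ι ι α) (e : κ → ι)
    (f : τ → ι) :
    M.submatrix (Sum.elim e f) (Sum.elim e f) =
      fromBlocks (M.submatrix e e) (M.submatrix e f) (M.submatrix f e) (M.submatrix f f) := by
  ext (k | k) (l | l) <;> rfl

variable {ι κ τ α : Type*} [Fintype κ] [DecidableEq κ] [CommRing α]

noncomputable def schurCompl (M : Matrix ι ι α) (e : κ → ι) : Matrix ι ι α :=
  M - M.submatrix id e * (M.submatrix e e)⁻¹ * M.submatrix e id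

lemma schurCompl_apply (M : Matrix ι ι α) (e : κ → ι) (p q : ι) :
    M.schurCompl e p q =
      M p q - (fun k => M p (e k)) ⬝ᵥ (M.submatrix e e)⁻¹ *ᵥ fun k => M (e k) q := by
  simp only [schurCompl, sub_apply, Matrix.mul_assoc, mul_apply, mulVec, dotProduct,
    submatrix_apply, id]

lemma IsSymm.schurCompl {M : Matrix ι ι α} (hM : M.IsSymm) (e : κ → ι) :
    (M.schurCompl e).IsSymm := by
  have hA : (M.submatrix e e).IsSymm := hM.submatrix e
  simp only [IsSymm, Matrix.schurCompl, transpose_sub, transpose_mul, Matrix.mul_assoc,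
    transpose_submatrix, transpose_nonsing_inv, hA.eq, hM.eq]

lemma det_submatrix_sumElim [Fintype τ] [DecidableEq τ] (M : Matrix ι ι α) (e : κ → ι)
    (f : τ → ι) (he : IsUnit (M.submatrix e e).det) :
    (M.submatrix (Sum.elim e f) (Sum.elim e f)).det =
      (M.submatrix e e).det * ((M.schurCompl e).submatrix f f).det := by
  let := (M.submatrix e e).invertibleOfIsUnitDet he
  rw [submatrix_sumElim_eq_fromBlocks, det_fromBlocks₁₁, invOf_eq_nonsing_inv]
  rfl

end Matrix

section Bordered

variable {n : ℕ} {R : Matrix (Fin n) (Fin n) ℝ}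

lemma brd_eq_submatrix (hR : R.IsSymm) {i : ℕ} (h : i ≤ n) {j : Fin n} (hj : R j j = 1) :
    brd R i h j =
      R.submatrix (Fin.lastCases j (Fin.castLE h)) (Fin.lastCases j (Fin.castLE h)) := by
  ext k l
  induction k using Fin.lastCases <;> induction l using Fin.lastCases <;>
    simp [brd, hj, hR.apply, Fin.castLE]

lemma lead_succ_eq_submatrix {i : ℕ} (h : i + 1 ≤ n) :
    lead R (i + 1) h =
      R.submatrix (Fin.lastCases ⟨i, h⟩ (Fin.castLE (Nat.le_of_succ_le h)))
        (Fin.lastCases ⟨i, h⟩ (Fin.castLE (Nat.le_of_succ_le h))) := by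
  have : Fin.castLE h = Fin.lastCases ⟨i, h⟩ (Fin.castLE (Nat.le_of_succ_le h)) := by
    funext k
    induction k using Fin.lastCases <;> simp [Fin.castLE]
  rw [lead, this]

lemma lastCases_comp_finSumFinEquiv {i : ℕ} (h : i ≤ n) (j : Fin n) :
    Fin.lastCases j (Fin.castLE h) ∘ finSumFinEquiv =
      Sum.elim (Fin.castLE h) fun _ : Fin 1 => j := by
  funext k
  rcases k with k | k
  · exact Fin.lastCases_castSucc (motive := fun _ => Fin n) k
  · rw [Fin.fin_one_eq_zero k]
    exact Fin.lastCases_last (motive := fun _ => Fin n)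

lemma lastCases_comp_finSumFinEquiv_two {i : ℕ} (h : i + 1 ≤ n) (j : Fin n) :
    Fin.lastCases j (Fin.castLE h) ∘ (finSumFinEquiv : Fin i ⊕ Fin 2 ≃ Fin (i + 1 + 1)) =
      Sum.elim (Fin.castLE (Nat.le_of_succ_le h)) ![⟨i, h⟩, j] := by
  funext k
  rcases k with k | k
  · exact Fin.lastCases_castSucc (motive := fun _ => Fin n) (Fin.castSucc k)
  · fin_cases k
    · exact Fin.lastCases_castSucc (motive := fun _ => Fin n) (Fin.last i)
    · exact Fin.lastCases_last (motive := fun _ => Fin n)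

lemma det_submatrix_lastCases {i : ℕ} (h : i ≤ n) (hA : IsUnit (lead R i h).det) (j : Fin n) :
    (R.submatrix (Fin.lastCases j (Fin.castLE h)) (Fin.lastCases j (Fin.castLE h))).det =
      (lead R i h).det * R.schurCompl (Fin.castLE h) j j := by
  rw [← det_submatrix_equiv_self finSumFinEquiv, submatrix_submatrix,
    lastCases_comp_finSumFinEquiv, det_submatrix_sumElim _ _ _ hA, det_fin_one]
  rfl

lemma det_brd (hR : R.IsSymm) {i : ℕ} (h : i ≤ n) (hA : IsUnit (lead R i h).det) {j : Fin n}
    (hj : R j j = 1) :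
    (brd R i h j).det = (lead R i h).det * R.schurCompl (Fin.castLE h) j j := by
  rw [brd_eq_submatrix hR h hj, det_submatrix_lastCases h hA]

lemma det_lead_succ {i : ℕ} (h : i + 1 ≤ n) (hA : IsUnit (lead R i (Nat.le_of_succ_le h)).det) :
    (lead R (i + 1) h).det = (lead R i (Nat.le_of_succ_le h)).det *
      R.schurCompl (Fin.castLE (Nat.le_of_succ_le h)) ⟨i, h⟩ ⟨i, h⟩ := by
  rw [lead_succ_eq_submatrix, det_submatrix_lastCases _ hA]

lemma det_brd_succ (hR : R.IsSymm) {i : ℕ} (h : i + 1 ≤ n)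
    (hA : IsUnit (lead R i (Nat.le_of_succ_le h)).det) {j : Fin n} (hj : R j j = 1) :
    (brd R (i + 1) h j).det = (lead R i (Nat.le_of_succ_le h)).det *
      (R.schurCompl (Fin.castLE (Nat.le_of_succ_le h)) ⟨i, h⟩ ⟨i, h⟩ *
          R.schurCompl (Fin.castLE (Nat.le_of_succ_le h)) j j -
        R.schurCompl (Fin.castLE (Nat.le_of_succ_le h)) j ⟨i, h⟩ ^ 2) := by
  rw [brd_eq_submatrix hR h hj, ← det_submatrix_equiv_self (finSumFinEquiv (m := i) (n := 2)),
    submatrix_submatrix, lastCases_comp_finSumFinEquiv_two, det_submatrix_sumElim _ _ _ hA,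
    det_fin_two]
  congr 1
  simp [sq, (hR.schurCompl _).apply ⟨i, h⟩ j]

end Bordered

theorem stmt6_general {n : ℕ} (R : Matrix (Fin n) (Fin n) ℝ) (hR : R.PosDef)
    (hdiag : ∀ k, R k k = 1) (m : ℕ) (hm : m + 1 ≤ n) (jf : Fin n) :
    (brd R m (Nat.le_of_succ_le hm) jf).det / (lead R m (Nat.le_of_succ_le hm)).det -
        (brd R (m + 1) hm jf).det / (lead R (m + 1) hm).det =
      (R ⟨m, hm⟩ jf - colv R m (Nat.le_of_succ_le hm) jf ⬝ᵥ
            (lead R m (Nat.le_of_succ_le hm))⁻¹ *ᵥ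
              colv R m (Nat.le_of_succ_le hm) ⟨m, hm⟩) ^ 2 *
        (lead R m (Nat.le_of_succ_le hm)).det / (lead R (m + 1) hm).det := by
  have hsym : R.IsSymm := isHermitian_iff_isSymm.mp hR.isHermitian
  have hA : 0 < (lead R m (Nat.le_of_succ_le hm)).det :=
    (hR.submatrix (Fin.castLE_injective _)).det_pos
  have hAu := hA.ne'.isUnit
  have hS : R.schurCompl (Fin.castLE (Nat.le_of_succ_le hm)) jf ⟨m, hm⟩ =
      R ⟨m, hm⟩ jf - colv R m (Nat.le_of_succ_le hm) jf ⬝ᵥ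
        (lead R m (Nat.le_of_succ_le hm))⁻¹ *ᵥ
          colv R m (Nat.le_of_succ_le hm) ⟨m, hm⟩ := by
    simp only [schurCompl_apply, fun k => hsym.apply k jf]
    rfl
  have hSm : 0 < R.schurCompl (Fin.castLE (Nat.le_of_succ_le hm)) ⟨m, hm⟩ ⟨m, hm⟩ := by
    have := (hR.submatrix (Fin.castLE_injective hm)).det_pos
    rw [← lead, det_lead_succ hm hAu] at this
    exact pos_of_mul_pos_right this hA.le
  rw [det_brd hsym _ hAu (hdiag jf), det_lead_succ hm hAu, det_brd_succ hsym hm hAu (hdiag jf),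
    ← hS]
  field_simp
  ring

/-- Lemma 2 of the paper: for `j ≥ i + 1 ≥ 3`,
`det(R_i^{*j})/det(R_{i−1}) − det(R_{i+1}^{*j})/det(R_i)
  = (R_{ij} − ρ_i^{*j} R_{i−1}⁻¹ ρ_iᵀ)² · det(R_{i−1})/det(R_i)`.
Here `m = i − 1 ≥ 1` is 0-indexed and the paper's `R_i^{*j}` is `brd R m`. -/
theorem stmt6 {n : ℕ} (R : Matrix (Fin n) (Fin n) ℝ) (hR : R.PosDef)
    (hdiag : ∀ k, R k k = 1) (m : ℕ) (hm1 : 1 ≤ m) (hm : m + 1 ≤ n) (jf : Fin n)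
    (hj : m + 1 ≤ (jf : ℕ)) :
    (brd R m (Nat.le_of_succ_le hm) jf).det / (lead R m (Nat.le_of_succ_le hm)).det -
        (brd R (m + 1) hm jf).det / (lead R (m + 1) hm).det =
      (R ⟨m, hm⟩ jf - colv R m (Nat.le_of_succ_le hm) jf ⬝ᵥ
            (lead R m (Nat.le_of_succ_le hm))⁻¹ *ᵥ
              colv R m (Nat.le_of_succ_le hm) ⟨m, hm⟩) ^ 2 *
        (lead R m (Nat.le_of_succ_le hm)).det / (lead R (m + 1) hm).det :=
  stmt6_general R hR hdiag m hm jf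
end

section
/- Let R be a symmetric positive-definite correlation matrix with Cholesky factor L = (l_{ji}). For fixed k < p, the semi-partial correlations ρ_{1p}, ρ_{2p(1)}, ..., ρ_{kp(1,...,k−1)} (i.e., l_{p1}, ..., l_{pk}) are all zero if and only if the ordinary correlations ρ_{1p}, ρ_{2p}, ..., ρ_{kp} (i.e., R_{1p},...,R_{kp}) are all zero. -/
/-!
If `R_{jp} = 0` for all `j < i`, the vector `ρ_i^{*p}` vanishes, so the semi-partial correlation
`l_{pi}` is just `R_{ip} / √(1 - ρ_i R_{i-1}⁻¹ ρ_iᵀ)`. The radicand is the Schur complement of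
`R_{i-1}` in the leading `(i+1) × (i+1)` block of `R`; multiplied by `det R_{i-1} > 0` it gives the
determinant of that positive definite block, so it is positive and `l_{pi} = 0 ↔ R_{ip} = 0`.
Strong induction on `i` then handles the first `k` indices simultaneously.
-/

open Matrix

theorem forall_lt_iff_of_forall_lt_imp_iff {k : ℕ} {P Q : ∀ i, i < k → Prop}
    (h : ∀ i (hi : i < k), (∀ j (hj : j < i), Q j (hj.trans hi)) → (P i hi ↔ Q i hi)) :
    (∀ i hi, P i hi) ↔ ∀ i hi, Q i hi := by
  constructor
  · intro hP i
    induction i using Nat.strong_induction_on with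
    | _ i ih => exact fun hi => (h i hi fun j hj => ih j hj _).mp (hP i hi)
  · exact fun hQ i hi => (h i hi fun j hj => hQ j _).mpr (hQ i hi)

section Correlation

variable {n : ℕ} {R : Matrix (Fin n) (Fin n) ℝ}

theorem submatrix_sumElim_eq_fromBlocks (hsymm : R.IsSymm) (hdiag : ∀ k, R k k = 1) {m : ℕ}
    (hm : m < n) :
    R.submatrix (Sum.elim (Fin.castLE hm.le) fun _ : Unit => ⟨m, hm⟩)
        (Sum.elim (Fin.castLE hm.le) fun _ : Unit => ⟨m, hm⟩) =
      fromBlocks (lead R m hm.le) (replicateCol Unit (colv R m hm.le ⟨m, hm⟩))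
        (replicateRow Unit (colv R m hm.le ⟨m, hm⟩)) 1 := by
  ext (a | _) (b | _)
  · rfl
  · rfl
  · exact hsymm.apply _ _
  · exact hdiag _

theorem one_sub_dotProduct_lead_inv_pos (hR : R.PosDef) (hdiag : ∀ k, R k k = 1) {m : ℕ}
    (hm : m < n) :
    0 < 1 - colv R m hm.le ⟨m, hm⟩ ⬝ᵥ (lead R m hm.le)⁻¹ *ᵥ colv R m hm.le ⟨m, hm⟩ := by
  have hA : (lead R m hm.le).PosDef := hR.submatrix (Fin.castLE_injective _)
  have : Invertible (lead R m hm.le) := hA.isUnit.invertible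
  have hinj :
      Function.Injective (Sum.elim (Fin.castLE hm.le) fun _ : Unit => (⟨m, hm⟩ : Fin n)) := by
    rintro (a | _) (b | _) hab <;> simp_all [Fin.ext_iff]
    all_goals omega
  have hdet := (hR.submatrix hinj).det_pos
  rw [submatrix_sumElim_eq_fromBlocks (isHermitian_iff_isSymm.mp hR.1) hdiag hm,
    det_fromBlocks₁₁, det_unique (_ - _), invOf_eq_nonsing_inv, Matrix.mul_assoc, ← replicateCol_mulVec,
    Matrix.sub_apply, one_apply_eq, replicateRow_mul_replicateCol_apply] at hdet
  exact pos_of_mul_pos_right hdet hA.det_pos.le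

theorem spc_eq_zero_iff_of_colv_eq_zero (hR : R.PosDef) (hdiag : ∀ k, R k k = 1) {i : ℕ} (hi : i < n)
    {j : Fin n} (hcol : colv R i hi.le j = 0) : spc R i hi j = 0 ↔ R ⟨i, hi⟩ j = 0 := by
  rw [spc, hcol, zero_dotProduct, sub_zero, div_eq_zero_iff, Real.sqrt_eq_zero',
    or_iff_left (one_sub_dotProduct_lead_inv_pos hR hdiag hi).not_ge]

end Correlation

/-- Remark of Section 5: for `k < p`, the first `k` semi-partial correlations
`ρ_{1p}, ρ_{2p(1)}, …, ρ_{kp(1,…,k−1)}` (the first `k` entries of row `p` of the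
Cholesky factor) vanish iff the ordinary correlations `R_{1p}, …, R_{kp}`
vanish (0-indexed below). -/
theorem stmt17 {n : ℕ} (R : Matrix (Fin n) (Fin n) ℝ) (hR : R.PosDef)
    (hdiag : ∀ k, R k k = 1) (p : Fin n) (k : ℕ) (hk : k < (p : ℕ)) :
    (∀ (i : ℕ) (hi : i < k),
        spc R i (by have := p.isLt; omega) p = 0) ↔
      (∀ (i : ℕ) (hi : i < k), R ⟨i, by have := p.isLt; omega⟩ p = 0) :=
  forall_lt_iff_of_forall_lt_imp_iff fun _ _ hprev =>
    spc_eq_zero_iff_of_colv_eq_zero hR hdiag _ (funext fun j => hprev j j.isLt)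
end
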